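/- Let G be a graph, u,v nonadjacent vertices, and let G' be obtained from G by adding N+1 internally disjoint new paths of length 3 between u and v (new non-edges between added vertices and V(G) forbidden). If F is a set of at most N non-edges of G such that G' + F is C4-free, then uv ∉ F. -/

import Mathlib

/-! The vertices `u, x₀, y₀, v` span an induced path in `G'`, and this stays true in `G' + F`
because `F` only joins old vertices. So if `uv ∈ F`, they span an induced `C4`. -/

/-- The cycle on 4 vertices. -/
def C4 : SimpleGraph (Fin 4) :=
  SimpleGraph.fromEdgeSet {s(0,1), s(1,2), s(2,3), s(3,0)}

/-- The graph `G'` obtained from `G` by adding `M` internally disjoint new paths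
of length 3 between `u` and `v`: for each `i < M` two internal vertices
`xᵢ = (i, false)` and `yᵢ = (i, true)` with edges `u xᵢ, xᵢ yᵢ, yᵢ v`, and no
other edges incident to the new vertices. -/
def addPaths {V : Type*} (G : SimpleGraph V) (u v : V) (M : ℕ) :
    SimpleGraph (V ⊕ (Fin M × Bool)) :=
  SimpleGraph.fromRel (fun x y =>
    match x, y with
    | Sum.inl a, Sum.inl b => G.Adj a b
    | Sum.inl a, Sum.inr (_, false) => a = u
    | Sum.inl a, Sum.inr (_, true) => a = v
    | Sum.inr (i, false), Sum.inr (j, true) => i = j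
    | _, _ => False)

open SimpleGraph

lemma nonempty_C4_embedding_of_induced_cycle {W : Type*} {H : SimpleGraph W} {a b c d : W}
    (hab : H.Adj a b) (hbc : H.Adj b c) (hcd : H.Adj c d) (hda : H.Adj d a)
    (hac : ¬H.Adj a c) (hbd : ¬H.Adj b d) (hac' : a ≠ c) (hbd' : b ≠ d) :
    Nonempty (C4 ↪g H) := by
  have hinj : Function.Injective ![a, b, c, d] := by
    intro i j hij
    fin_cases i <;> fin_cases j <;>
      simp_all [hab.ne, hbc.ne, hcd.ne, hda.ne, hab.ne.symm, hbc.ne.symm, hcd.ne.symm,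
        hda.ne.symm, hac'.symm, hbd'.symm]
  have hca : ¬H.Adj c a := fun h => hac h.symm
  have hdb : ¬H.Adj d b := fun h => hbd h.symm
  refine ⟨⟨⟨_, hinj⟩, fun {i j} => ?_⟩⟩
  fin_cases i <;> fin_cases j <;>
    simp [C4, hab, hbc, hcd, hda, hab.symm, hbc.symm, hcd.symm, hda.symm, hac, hbd, hca, hdb]

lemma sup_fromEdgeSet_map_inl_adj_inl_inr {V W : Type*} (H : SimpleGraph (V ⊕ W))
    (F : Set (Sym2 V)) (a : V) (b : W) :
    (H ⊔ fromEdgeSet (Sym2.map Sum.inl '' F)).Adj (.inl a) (.inr b) ↔ H.Adj (.inl a) (.inr b) := by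
  refine ⟨fun h => h.resolve_right ?_, Or.inl⟩
  rintro ⟨⟨⟨p, q⟩, -, he⟩, -⟩
  simp at he

section addPaths

variable {V : Type*} (G : SimpleGraph V) (u v : V) (M : ℕ)

@[simp]
lemma addPaths_adj_inl_inr_false (a : V) (i : Fin M) :
    (addPaths G u v M).Adj (.inl a) (.inr (i, false)) ↔ a = u := by
  simp [addPaths]

@[simp]
lemma addPaths_adj_inl_inr_true (a : V) (i : Fin M) :
    (addPaths G u v M).Adj (.inl a) (.inr (i, true)) ↔ a = v := by
  simp [addPaths]

@[simp]
lemma addPaths_adj_inr_false_inr_true (i j : Fin M) :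
    (addPaths G u v M).Adj (.inr (i, false)) (.inr (j, true)) ↔ i = j := by
  simp [addPaths]

end addPaths

theorem uv_not_filled_general {V : Type*} (G : SimpleGraph V) (u v : V)
    (hne : u ≠ v) (N : ℕ)
    (F : Set (Sym2 V))
    (hfree : IsEmpty (C4 ↪g
      (addPaths G u v (N + 1) ⊔ SimpleGraph.fromEdgeSet (Sym2.map Sum.inl '' F)))) :
    s(u, v) ∉ F := by
  intro huvF
  set H := addPaths G u v (N + 1) ⊔ fromEdgeSet (Sym2.map Sum.inl '' F)
  have hmixed := sup_fromEdgeSet_map_inl_adj_inl_inr (addPaths G u v (N + 1)) F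
  let x : V ⊕ (Fin (N + 1) × Bool) := .inr (0, false)
  let y : V ⊕ (Fin (N + 1) × Bool) := .inr (0, true)
  have hux : H.Adj (.inl u) x := (hmixed _ _).2 (by simp)
  have hxy : H.Adj x y := Or.inl (by simp [x, y])
  have hyv : H.Adj y (.inl v) := ((hmixed _ _).2 (by simp)).symm
  have hvu : H.Adj (.inl v) (.inl u) :=
    Or.inr ⟨⟨s(u, v), huvF, by simp [Sym2.eq_swap]⟩, by simpa using hne.symm⟩
  have huy : ¬H.Adj (.inl u) y := by simp [H, y, hmixed, hne]
  have hxv : ¬H.Adj x (.inl v) := fun h => hne.symm (by simpa [H, x, hmixed] using h.symm)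
  exact hfree.false (nonempty_C4_embedding_of_induced_cycle hux hxy hyv hvu huy hxv
    Sum.inl_ne_inr Sum.inr_ne_inl).some

/-- Let `u, v` be nonadjacent vertices of `G` and let `G'` be obtained by adding
`N + 1` internally disjoint paths of length 3 between `u` and `v`. If `F` is a
set of at most `N` non-edges of `G` such that `G' + F` is `C4`-free, then
`uv ∉ F`. -/
theorem uv_not_filled {V : Type*} (G : SimpleGraph V) (u v : V)
    (hne : u ≠ v) (huv : ¬G.Adj u v) (N : ℕ)
    (F : Set (Sym2 V)) (hF : F ⊆ Gᶜ.edgeSet) (hFfin : F.Finite) (hFcard : F.ncard ≤ N)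
    (hfree : IsEmpty (C4 ↪g
      (addPaths G u v (N + 1) ⊔ SimpleGraph.fromEdgeSet (Sym2.map Sum.inl '' F)))) :
    s(u, v) ∉ F :=
  uv_not_filled_general G u v hne N F hfree
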